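/- Let λ ∈ (0,1), s ≠ e₁ a unit vector, γ ∈ K_{s,λ}, and R ∈ SO(2). Then the matrix N := R(I + (γ/λ) e₁⊗e₂) satisfies: N e₁ = R e₁, det N = 1, |Ns| ≤ 1 (so N ∈ N_s), |Ne₁| = 1 (so N ∈ M_{e₁}), and λN + (1−λ)R = R(I + γ e₁⊗e₂). -/

import Mathlib

open Matrix Set

noncomputable section

/-- `SO(2)`: real 2×2 special orthogonal matrices. -/
def SO2 (R : Matrix (Fin 2) (Fin 2) ℝ) : Prop := R * Rᵀ = 1 ∧ R.det = 1

/-- Squared Euclidean norm of a vector in ℝ². -/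
def sq2 (v : Fin 2 → ℝ) : ℝ := v 0 ^ 2 + v 1 ^ 2

/-- Perpendicular vector `s^⊥ = (-s₂, s₁)`. -/
def perp (s : Fin 2 → ℝ) : Fin 2 → ℝ := ![-(s 1), s 0]

/-- The rank-one matrix `e₁ ⊗ e₂`. -/
def E12 : Matrix (Fin 2) (Fin 2) ℝ := vecMulVec ![1, 0] ![0, 1]

/-- The constraint set `K_{s,λ}`. -/
def KsLam (s : Fin 2 → ℝ) (lam : ℝ) : Set ℝ :=
  if s = ![0, 1] then {0}
  else if 0 < s 0 * s 1 then Icc (-2 * (s 0 / s 1) * lam) 0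
  else Icc 0 (-2 * (s 0 / s 1) * lam)

lemma sq2_mulVec (R : Matrix (Fin 2) (Fin 2) ℝ) (hR : Rᵀ * R = 1)
    (v : Fin 2 → ℝ) : sq2 (R *ᵥ v) = sq2 v := by
  have h00 := congrFun (congrFun hR 0) 0
  have h01 := congrFun (congrFun hR 0) 1
  have h11 := congrFun (congrFun hR 1) 1
  simp [Matrix.mul_apply, Fin.sum_univ_two, Matrix.one_apply] at h00 h01 h11
  simp only [sq2, Matrix.mulVec, dotProduct, Fin.sum_univ_two]
  linear_combination (v 0)^2 * h00 + 2 * v 0 * v 1 * h01 + (v 1)^2 * h11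

/-- for `λ ∈ (0,1)`, a unit vector `s ≠ e₁`, `γ ∈ K_{s,λ}` and
`R ∈ SO(2)`, the matrix `N = R(I + (γ/λ)e₁⊗e₂)` satisfies `Ne₁ = Re₁`,
`det N = 1`, `|Ns| ≤ 1`, `|Ne₁| = 1`, and `λN + (1−λ)R = R(I + γ e₁⊗e₂)`. -/
theorem stmt10 (lam : ℝ) (hlam : lam ∈ Ioo (0 : ℝ) 1)
    (s : Fin 2 → ℝ) (hs : sq2 s = 1) (hse1 : s ≠ ![1, 0])
    (hcase : s = ![0, 1] ∨ s = ![0, -1] ∨ s 0 * s 1 ≠ 0)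
    (γ : ℝ) (hγ : γ ∈ KsLam s lam)
    (R : Matrix (Fin 2) (Fin 2) ℝ) (hR : SO2 R)
    (N : Matrix (Fin 2) (Fin 2) ℝ) (hN : N = R * (1 + (γ / lam) • E12)) :
    N *ᵥ ![1, 0] = R *ᵥ ![1, 0] ∧ N.det = 1 ∧ sq2 (N *ᵥ s) ≤ 1 ∧
      sq2 (N *ᵥ ![1, 0]) = 1 ∧
      lam • N + (1 - lam) • R = R * (1 + γ • E12) := by
  obtain ⟨hlam0, hlam1⟩ := hlam
  have hlamne : lam ≠ 0 := ne_of_gt hlam0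
  have hRT : Rᵀ * R = 1 := mul_eq_one_comm.mp hR.1
  set c := γ / lam with hc
  -- N e₁ = R e₁
  have hNe : N *ᵥ ![1, 0] = R *ᵥ ![1, 0] := by
    subst hN
    funext i
    simp [Matrix.mulVec, Matrix.mul_apply, dotProduct, Fin.sum_univ_two,
      E12, vecMulVec_apply, Matrix.one_apply]
  -- N s = R ((1+cE12) s)
  have hNs : ∀ v : Fin 2 → ℝ, N *ᵥ v = R *ᵥ (![v 0 + c * v 1, v 1]) := by
    intro v
    subst hN
    funext i
    simp [Matrix.mulVec, Matrix.mul_apply, dotProduct, Fin.sum_univ_two,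
      E12, vecMulVec_apply, Matrix.one_apply]
    ring
  refine ⟨hNe, ?_, ?_, ?_, ?_⟩
  · -- det
    subst hN
    rw [Matrix.det_mul, hR.2, one_mul,
      Matrix.det_fin_two]
    simp [E12, vecMulVec_apply, Matrix.one_apply]
  · -- |Ns| ≤ 1
    rw [hNs s, sq2_mulVec R hRT]
    have key : c * s 1 * (c * s 1 + 2 * s 0) ≤ 0 := by
      unfold KsLam at hγ
      split_ifs at hγ with h1 h2
      · -- s = e₂, γ = 0
        simp at hγ; subst hγ; simp [hc]
      · -- s0 s1 > 0
        obtain ⟨hγl, hγu⟩ := hγ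
        have hcu : c ≤ 0 := div_nonpos_of_nonpos_of_nonneg hγu hlam0.le
        have hcl : -2 * (s 0 / s 1) ≤ c := by
          rw [hc, le_div_iff₀ hlam0]
          linarith
        have hs1 : s 1 ≠ 0 := by
          intro h0; rw [h0, mul_zero] at h2; exact lt_irrefl 0 h2
        have h2s : -2 * s 0 * s 1 ≤ c * s 1 ^ 2 := by
          have := mul_le_mul_of_nonneg_right hcl (sq_nonneg (s 1))
          calc -2 * s 0 * s 1 = -2 * (s 0 / s 1) * s 1 ^ 2 := by
                field_simp
            _ ≤ c * s 1 ^ 2 := this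
        nlinarith [mul_nonpos_of_nonpos_of_nonneg hcu
          (by nlinarith : (0:ℝ) ≤ c * s 1 ^ 2 + 2 * (s 0 * s 1))]
      · -- s0 s1 ≤ 0 (and not the e₂ case)
        obtain ⟨hγl, hγu⟩ := hγ
        have hcl : 0 ≤ c := div_nonneg hγl hlam0.le
        rcases hcase with h | h | h
        · exact absurd h h1
        · subst h; simp at hγu ⊢
          have : γ = 0 := le_antisymm (by simpa using hγu) hγl
          simp [hc, this]
        · have hlt : s 0 * s 1 < 0 := lt_of_le_of_ne (not_lt.mp h2) h
          have hs1 : s 1 ≠ 0 := by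
            intro h0; rw [h0, mul_zero] at hlt; exact lt_irrefl 0 hlt
          have hcu : c ≤ -2 * (s 0 / s 1) := by
            rw [hc, div_le_iff₀ hlam0]
            linarith
          have h2s : c * s 1 ^ 2 ≤ -2 * s 0 * s 1 := by
            have := mul_le_mul_of_nonneg_right hcu (sq_nonneg (s 1))
            calc c * s 1 ^ 2 ≤ -2 * (s 0 / s 1) * s 1 ^ 2 := this
              _ = -2 * s 0 * s 1 := by field_simp
          nlinarith [mul_nonneg hcl
            (by nlinarith : (0:ℝ) ≤ -(c * s 1 ^ 2 + 2 * (s 0 * s 1)))]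
    have : sq2 ![s 0 + c * s 1, s 1] = 1 + c * s 1 * (c * s 1 + 2 * s 0) := by
      simp [sq2] at hs ⊢; nlinarith [hs]
    rw [this]; linarith
  · -- |N e₁| = 1
    rw [hNe, sq2_mulVec R hRT]
    simp [sq2]
  · -- convexity identity
    subst hN
    have : lam • ((γ / lam) • E12) = γ • E12 := by
      rw [smul_smul, mul_div_cancel₀ _ hlamne]
    rw [mul_add, mul_add, smul_add, Matrix.mul_smul, Matrix.mul_smul,
      ← smul_assoc]
    rw [mul_one, sub_smul, one_smul]
    have h2 : (lam • (γ / lam)) • (R * E12) = γ • (R * E12) := by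
      rw [smul_eq_mul, mul_div_cancel₀ _ hlamne]
    rw [h2]
    abel
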